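/- Let π be a simple permutation in Av(52341, 53241, 52431, 35142, 42513, 351624) with extreme pattern 2413, and let b, d, a, c be the first, greatest, least, and last values respectively. Then the values at positions in [π⁻¹(d), π⁻¹(a)] form a pattern of the form σ₁ ⊖ σ₂ ⊖ ⋯ ⊖ σ_k where each σ_i ∈ {1, 12}. -/
import Mathlib


/-- `π` contains the pattern `σ`: some subsequence of `π` has the same relative
order as `σ`. -/
def Contains {n k : ℕ} (π : Fin n → Fin n) (σ : Fin k → Fin k) : Prop :=
  ∃ f : Fin k → Fin n, StrictMono f ∧ ∀ a b : Fin k, σ a < σ b ↔ π (f a) < π (f b)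

/-- `π` avoids the pattern `σ`. -/
def Avoids {n k : ℕ} (π : Fin n → Fin n) (σ : Fin k → Fin k) : Prop :=
  ¬ Contains π σ

/-- The (closed) position interval `[l, u]` is a block of `π`: its image is an
interval `[a, b]` of values. -/
def IsBlock {n : ℕ} (π : Fin n → Fin n) (l u : Fin n) : Prop :=
  ∃ a b : Fin n, ∀ v : Fin n, (a ≤ v ∧ v ≤ b) ↔ ∃ i : Fin n, l ≤ i ∧ i ≤ u ∧ π i = v

/-- A permutation is simple if its only blocks are the singletons and the whole
interval `[1, n]`; by convention the permutation `1` (and the empty one) is not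
simple. -/
lemma contains_of_five {n : ℕ} (π : Fin n → Fin n) (σ : Fin 5 → Fin 5)
    (x0 x1 x2 x3 x4 : Fin n) (h01 : x0 < x1) (h12 : x1 < x2) (h23 : x2 < x3) (h34 : x3 < x4)
    (hord : ∀ a b : Fin 5, σ a < σ b ↔ π (![x0,x1,x2,x3,x4] a) < π (![x0,x1,x2,x3,x4] b)) :
    Contains π σ := by
  refine ⟨![x0,x1,x2,x3,x4], ?_, hord⟩
  rw [Fin.strictMono_iff_lt_succ]
  intro i
  fin_cases i <;> simpa

lemma contains_52341 {n : ℕ} (π : Fin n → Fin n) (x0 x1 x2 x3 x4 : Fin n)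
    (h01 : x0 < x1) (h12 : x1 < x2) (h23 : x2 < x3) (h34 : x3 < x4)
    (c0 : (π x4 : ℕ) < (π x1 : ℕ)) (c1 : (π x1 : ℕ) < (π x2 : ℕ))
    (c2 : (π x2 : ℕ) < (π x3 : ℕ)) (c3 : (π x3 : ℕ) < (π x0 : ℕ)) :
    Contains π (![4, 1, 2, 3, 0] : Fin 5 → Fin 5) := by
  refine contains_of_five π _ x0 x1 x2 x3 x4 h01 h12 h23 h34 ?_
  intro a b
  fin_cases a <;> fin_cases b <;>
    simp only [Matrix.cons_val_zero, Matrix.cons_val_one, Matrix.head_cons,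
      Matrix.cons_val_two, Matrix.tail_cons, Matrix.cons_val_three, Matrix.cons_val_four,
      Fin.lt_def, Fin.isValue] <;>
    simp <;> omega

lemma contains_53241 {n : ℕ} (π : Fin n → Fin n) (x0 x1 x2 x3 x4 : Fin n)
    (h01 : x0 < x1) (h12 : x1 < x2) (h23 : x2 < x3) (h34 : x3 < x4)
    (c0 : (π x4 : ℕ) < (π x2 : ℕ)) (c1 : (π x2 : ℕ) < (π x1 : ℕ))
    (c2 : (π x1 : ℕ) < (π x3 : ℕ)) (c3 : (π x3 : ℕ) < (π x0 : ℕ)) :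
    Contains π (![4, 2, 1, 3, 0] : Fin 5 → Fin 5) := by
  refine contains_of_five π _ x0 x1 x2 x3 x4 h01 h12 h23 h34 ?_
  intro a b
  fin_cases a <;> fin_cases b <;>
    simp only [Matrix.cons_val_zero, Matrix.cons_val_one, Matrix.head_cons,
      Matrix.cons_val_two, Matrix.tail_cons, Matrix.cons_val_three, Matrix.cons_val_four,
      Fin.lt_def, Fin.isValue] <;>
    simp <;> omega

lemma contains_52431 {n : ℕ} (π : Fin n → Fin n) (x0 x1 x2 x3 x4 : Fin n)
    (h01 : x0 < x1) (h12 : x1 < x2) (h23 : x2 < x3) (h34 : x3 < x4)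
    (c0 : (π x4 : ℕ) < (π x1 : ℕ)) (c1 : (π x1 : ℕ) < (π x3 : ℕ))
    (c2 : (π x3 : ℕ) < (π x2 : ℕ)) (c3 : (π x2 : ℕ) < (π x0 : ℕ)) :
    Contains π (![4, 1, 3, 2, 0] : Fin 5 → Fin 5) := by
  refine contains_of_five π _ x0 x1 x2 x3 x4 h01 h12 h23 h34 ?_
  intro a b
  fin_cases a <;> fin_cases b <;>
    simp only [Matrix.cons_val_zero, Matrix.cons_val_one, Matrix.head_cons,
      Matrix.cons_val_two, Matrix.tail_cons, Matrix.cons_val_three, Matrix.cons_val_four,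
      Fin.lt_def, Fin.isValue] <;>
    simp <;> omega

def IsSimple {n : ℕ} (π : Fin n → Fin n) : Prop :=
  2 ≤ n ∧ ∀ l u : Fin n, l ≤ u → IsBlock π l u → l = u ∨ ((l : ℕ) = 0 ∧ (u : ℕ) = n - 1)

/-- Let `π` be a simple permutation in `Av(52341, 53241, 52431, 35142, 42513, 351624)`
with extreme pattern 2413, the greatest value at position `pd` and the least value
at position `pa`.  Then the values at positions in `[π⁻¹(d), π⁻¹(a)] = [pd, pa]`
form a pattern `σ₁ ⊖ σ₂ ⊖ ⋯ ⊖ σ_k` with every `σ_i ∈ {1, 12}`: every ascent inside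
this segment occupies two adjacent positions and two (relatively) adjacent values of
the segment. -/
theorem stmt17 (n : ℕ) (hn : 4 ≤ n) (π : Fin n → Fin n) (hπ : Function.Bijective π)
    (hs : IsSimple π)
    (h1 : Avoids π (![4, 1, 2, 3, 0] : Fin 5 → Fin 5))
    (h2 : Avoids π (![4, 2, 1, 3, 0] : Fin 5 → Fin 5))
    (h3 : Avoids π (![4, 1, 3, 2, 0] : Fin 5 → Fin 5))
    (h4 : Avoids π (![2, 4, 0, 3, 1] : Fin 5 → Fin 5))
    (h5 : Avoids π (![3, 1, 4, 0, 2] : Fin 5 → Fin 5))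
    (h6 : Avoids π (![2, 4, 0, 5, 1, 3] : Fin 6 → Fin 6))
    (pd pa : Fin n) (hpd : (π pd : ℕ) = n - 1) (hpa : (π pa : ℕ) = 0)
    (hpd0 : 0 < (pd : ℕ)) (hpdpa : pd < pa) (hpal : (pa : ℕ) < n - 1)
    (hbc : (π ⟨0, by omega⟩ : ℕ) < (π ⟨n - 1, by omega⟩ : ℕ)) :
    ∀ p q : Fin n, pd ≤ p → p < q → q ≤ pa → π p < π q →
      (q : ℕ) = (p : ℕ) + 1 ∧
      ∀ r : Fin n, pd ≤ r → r ≤ pa → ¬ (π p < π r ∧ π r < π q) := by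
  intro p q hp hpq hq hval
  have hinj := hπ.injective
  -- π pd is the maximum, π pa is the minimum
  have hmax : ∀ x : Fin n, x ≠ pd → (π x : ℕ) < (π pd : ℕ) := by
    intro x hx
    have hle : (π x : ℕ) < n := (π x).isLt
    have hne : π x ≠ π pd := fun h => hx (hinj h)
    have : (π x : ℕ) ≠ (π pd : ℕ) := fun h => hne (Fin.ext h)
    omega
  have hmin : ∀ x : Fin n, x ≠ pa → (π pa : ℕ) < (π x : ℕ) := by
    intro x hx
    have hne : π x ≠ π pa := fun h => hx (hinj h)
    have : (π x : ℕ) ≠ (π pa : ℕ) := fun h => hne (Fin.ext h)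
    omega
  -- p and q are strictly inside (pd, pa)
  have hpdp : pd < p := by
    rcases lt_or_eq_of_le hp with h | h
    · exact h
    · exfalso
      have hq' : q ≠ pd := by
        intro h'
        rw [h', ← h] at hpq
        exact absurd hpq (lt_irrefl _)
      have hm := hmax q hq'
      have hv := Fin.lt_def.mp hval
      rw [h] at hm
      omega
  have hqpa : q < pa := by
    rcases lt_or_eq_of_le hq with h | h
    · exact h
    · exfalso
      have hp' : p ≠ pa := by
        intro h'
        rw [h', ← h] at hpq
        exact absurd hpq (lt_irrefl _)
      have hm := hmin p hp'
      rw [← h] at hm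
      have hv := Fin.lt_def.mp hval
      omega
  have hvpq : (π p : ℕ) < (π q : ℕ) := Fin.lt_def.mp hval
  have hvpdp : (π p : ℕ) < (π pd : ℕ) := hmax p (Fin.ne_of_gt hpdp)
  have hvpdq : (π q : ℕ) < (π pd : ℕ) := hmax q (Fin.ne_of_gt (lt_trans hpdp hpq))
  have hvpap : (π pa : ℕ) < (π p : ℕ) := hmin p (Fin.ne_of_lt (lt_trans hpq hqpa))
  have hvpaq : (π pa : ℕ) < (π q : ℕ) := hmin q (Fin.ne_of_lt hqpa)
  -- Part 1: positions are adjacent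
  have hadj : (q : ℕ) = (p : ℕ) + 1 := by
    by_contra hne
    have hlt : (p : ℕ) + 1 < (q : ℕ) := by
      have := Fin.lt_def.mp hpq; omega
    have hrbound : (p : ℕ) + 1 < n := lt_trans hlt q.isLt
    set r : Fin n := ⟨(p : ℕ) + 1, hrbound⟩ with hr
    have hpr : p < r := by rw [Fin.lt_def]; simp [hr]
    have hrq : r < q := by rw [Fin.lt_def]; simpa [hr]
    have hvr_p : π r ≠ π p := fun h => absurd (hinj h) (Fin.ne_of_gt hpr)
    have hvr_q : π r ≠ π q := fun h => absurd (hinj h) (Fin.ne_of_lt hrq)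
    have hvpdr : (π r : ℕ) < (π pd : ℕ) := hmax r (Fin.ne_of_gt (lt_trans hpdp hpr))
    have hvpar : (π pa : ℕ) < (π r : ℕ) := hmin r (Fin.ne_of_lt (lt_trans hrq hqpa))
    have hvrp : (π r : ℕ) ≠ (π p : ℕ) := fun h => hvr_p (Fin.ext h)
    have hvrq : (π r : ℕ) ≠ (π q : ℕ) := fun h => hvr_q (Fin.ext h)
    rcases lt_trichotomy ((π r : ℕ)) ((π p : ℕ)) with hc | hc | hc
    · -- π r < π p < π q : pattern 53241
      exact h2 (contains_53241 π pd p r q pa hpdp hpr hrq hqpa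
        (by omega) hc hvpq (by omega))
    · exact hvrp hc
    · rcases lt_trichotomy ((π r : ℕ)) ((π q : ℕ)) with hd | hd | hd
      · -- π p < π r < π q : pattern 52341
        exact h1 (contains_52341 π pd p r q pa hpdp hpr hrq hqpa
          (by omega) hc hd (by omega))
      · exact hvrq hd
      · -- π p < π q < π r : pattern 52431
        exact h3 (contains_52431 π pd p r q pa hpdp hpr hrq hqpa
          (by omega) (by omega) hd (by omega))
  refine ⟨hadj, ?_⟩
  -- Part 2: no value strictly between π p and π q in the segment
  rintro r hr1 hr2 ⟨ha, hb⟩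
  have hva : (π p : ℕ) < (π r : ℕ) := Fin.lt_def.mp ha
  have hvb : (π r : ℕ) < (π q : ℕ) := Fin.lt_def.mp hb
  have hrpd : r ≠ pd := by
    intro h; subst h; omega
  have hrpa : r ≠ pa := by
    intro h; subst h; omega
  have hpdr : pd < r := lt_of_le_of_ne hr1 (Ne.symm hrpd)
  have hrpa' : r < pa := lt_of_le_of_ne hr2 hrpa
  have hrp : r ≠ p := by
    intro h; subst h; omega
  have hrq : r ≠ q := by
    intro h; subst h; omega
  -- r is not between p and q (they are adjacent), so r < p or q < r
  have hcase : r < p ∨ q < r := by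
    rcases lt_trichotomy r p with h | h | h
    · exact Or.inl h
    · exact absurd h hrp
    · right
      have hh := Fin.lt_def.mp h
      rw [Fin.lt_def]
      rcases lt_trichotomy ((q : ℕ)) ((r : ℕ)) with h' | h' | h'
      · exact h'
      · exact absurd (Fin.ext h'.symm) hrq
      · omega
  rcases hcase with hc | hc
  · -- positions pd < r < p < q < pa, values π p < π r < π q : pattern 53241
    exact h2 (contains_53241 π pd r p q pa hpdr hc hpq hqpa
      (by omega) hva (by omega) (by omega))
  · -- positions pd < p < q < r < pa : pattern 52431
    exact h3 (contains_52431 π pd p q r pa hpdp hpq hc hrpa'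
      (by omega) (by omega) (by omega) (by omega))
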